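/- arXiv:1107.0185 — 4 statements merged into one kernel-verified Lean document; each statement's English description precedes it below -/
import Mathlib

section
/- If W is an infinite right-infinite word over a finite alphabet such that for some natural number n the number of distinct factors of W of length n is at most n, then W is eventually periodic. -/
/-!
The complexity `n ↦ #(factors of length n)` is monotone and equals `1` at `0`, so if it is at
most `n` somewhere it cannot increase strictly at every step: there is an `m` with as many
factors of length `m + 1` as of length `m`. Then every factor of length `m` has a unique right
extension, so the letters following two occurrences of the same length-`m` factor agree forever.
By pigeonhole some length-`m` factor occurs at two positions `a < b`, and `W` is periodic with
period `b - a` from `a` on.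
-/

def factorAt {A : Type*} (W : ℕ → A) (i n : ℕ) : List A :=
  (List.range n).map (fun j => W (i + j))

def IsFactorOf {A : Type*} (u : List A) (W : ℕ → A) : Prop :=
  ∃ i, u = factorAt W i u.length

namespace InfiniteWord

lemma exists_periodic_of_apply_add_eq {A : Type*} {W : ℕ → A} {a b : ℕ} (hab : a < b)
    (h : ∀ t, W (a + t) = W (b + t)) : ∃ N k : ℕ, 0 < k ∧ ∀ i ≥ N, W (i + k) = W i := by
  refine ⟨a, b - a, by omega, fun i hi => ?_⟩
  obtain ⟨t, rfl⟩ := Nat.exists_eq_add_of_le hi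
  rw [h t, show a + t + (b - a) = b + t by omega]

variable {A : Type*} (W : ℕ → A)

def factors (n : ℕ) : Set (List A) :=
  {u | IsFactorOf u W ∧ u.length = n}

@[simp]
lemma length_factorAt (i n : ℕ) : (factorAt W i n).length = n := by
  simp [factorAt]

lemma factorAt_zero (i : ℕ) : factorAt W i 0 = [] := rfl

lemma factorAt_succ (i n : ℕ) : factorAt W i (n + 1) = W i :: factorAt W (i + 1) n := by
  simp only [factorAt, List.range_succ_eq_map, List.map_cons, List.map_map, Nat.add_zero]
  congr 2
  funext j
  simp only [Function.comp_apply, Nat.succ_eq_add_one]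
  congr 1
  omega

lemma take_factorAt (i n : ℕ) : (factorAt W i (n + 1)).take n = factorAt W i n := by
  rw [factorAt, ← List.map_take, List.take_range, Nat.min_eq_left (by omega), factorAt]

lemma factors_eq_range (n : ℕ) : factors W n = Set.range (factorAt W · n) := by
  ext u
  constructor
  · rintro ⟨⟨i, hi⟩, rfl⟩
    exact ⟨i, hi.symm⟩
  · rintro ⟨i, rfl⟩
    exact ⟨⟨i, by rw [length_factorAt]⟩, length_factorAt W i n⟩

lemma factorAt_mem_factors (i n : ℕ) : factorAt W i n ∈ factors W n := by
  rw [factors_eq_range]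
  exact Set.mem_range_self i

lemma factors_zero : factors W 0 = {[]} := by
  simp only [factors_eq_range, factorAt_zero, Set.range_const]

lemma image_take_factors (n : ℕ) : List.take n '' factors W (n + 1) = factors W n := by
  simp only [factors_eq_range, ← Set.range_comp, Function.comp_def, take_factorAt]

variable [Finite A]

lemma factors_finite (n : ℕ) : (factors W n).Finite :=
  (List.finite_length_eq A n).subset fun _ hu => hu.2

lemma ncard_factors_le_succ (n : ℕ) : (factors W n).ncard ≤ (factors W (n + 1)).ncard := by
  rw [← image_take_factors]
  exact Set.ncard_image_le (factors_finite W (n + 1))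

lemma exists_ncard_factors_succ_eq {n : ℕ} (hn : (factors W n).ncard ≤ n) :
    ∃ m, (factors W (m + 1)).ncard = (factors W m).ncard := by
  by_contra! hstrict
  have hgrowth : ∀ m, m + 1 ≤ (factors W m).ncard := by
    intro m
    induction m with
    | zero => simp [factors_zero]
    | succ m ih =>
      exact ih.trans_lt <| (ncard_factors_le_succ W m).lt_of_ne (hstrict m).symm
  exact absurd (hgrowth n) (by omega)

section UniqueExtension

variable {W} {m : ℕ}

/-- Equal counts make `List.take m` injective on the factors of length `m + 1`. -/
lemma factorAt_succ_eq_of_factorAt_eq (hm : (factors W (m + 1)).ncard = (factors W m).ncard)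
    {i j : ℕ} (h : factorAt W i m = factorAt W j m) :
    factorAt W i (m + 1) = factorAt W j (m + 1) := by
  have hinj : Set.InjOn (List.take m) (factors W (m + 1)) :=
    Set.injOn_of_ncard_image_eq (by rw [image_take_factors, hm]) (factors_finite W (m + 1))
  refine hinj (factorAt_mem_factors W i _) (factorAt_mem_factors W j _) ?_
  simpa only [take_factorAt] using h

lemma apply_eq_and_factorAt_succ_eq (hm : (factors W (m + 1)).ncard = (factors W m).ncard)
    {i j : ℕ} (h : factorAt W i m = factorAt W j m) :
    W i = W j ∧ factorAt W (i + 1) m = factorAt W (j + 1) m := by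
  simpa only [factorAt_succ, List.cons.injEq] using factorAt_succ_eq_of_factorAt_eq hm h

lemma apply_add_eq_of_factorAt_eq (hm : (factors W (m + 1)).ncard = (factors W m).ncard)
    {i j : ℕ} (h : factorAt W i m = factorAt W j m) (t : ℕ) :
    W (i + t) = W (j + t) := by
  have hshift : ∀ t, factorAt W (i + t) m = factorAt W (j + t) m := by
    intro t
    induction t with
    | zero => exact h
    | succ t ih => exact (apply_eq_and_factorAt_succ_eq hm ih).2
  exact (apply_eq_and_factorAt_succ_eq hm (hshift t)).1

end UniqueExtension

lemma exists_lt_factorAt_eq (n : ℕ) : ∃ a b, a < b ∧ factorAt W a n = factorAt W b n :=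
  Set.Finite.exists_lt_map_eq_of_forall_mem (factorAt_mem_factors W · n) (factors_finite W n)

end InfiniteWord

/-- If for some n the number of distinct factors of length n of W is at most n,
then W is eventually periodic. -/
theorem stmt0 {A : Type*} [Fintype A] (W : ℕ → A)
    (h : ∃ n : ℕ, Set.ncard {u : List A | IsFactorOf u W ∧ u.length = n} ≤ n) :
    ∃ N k : ℕ, 0 < k ∧ ∀ i ≥ N, W (i + k) = W i := by
  obtain ⟨n, hn⟩ := h
  obtain ⟨m, hm⟩ := InfiniteWord.exists_ncard_factors_succ_eq W hn
  obtain ⟨a, b, hab, hfactor⟩ := InfiniteWord.exists_lt_factorAt_eq W m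
  exact InfiniteWord.exists_periodic_of_apply_add_eq hab
    (InfiniteWord.apply_add_eq_of_factorAt_eq hm hfactor)
end

section
/- Let W be a purely morphic word generated by a primitive morphism φ (so W = φ^∞(a₁) where φ(a₁) = a₁u and φ is primitive). Then the recurrence function P₂ of W is bounded above by a linear function: there exists C₃ such that P₂(N) ≤ C₃·N for all N ≥ 1. -/
/-- The monoid morphism `A* → B*` induced by a substitution on letters. -/
def msubst {A B : Type*} (φ : A → List B) (w : List A) : List B :=
  w.flatMap φ

open Function

lemma Nat.exists_mem_Ico_of_strictMono {f : ℕ → ℕ} (h0 : f 0 = 0) (hf : StrictMono f)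
    (i : ℕ) : ∃ t, i ∈ Set.Ico (f t) (f (t + 1)) := by
  induction i with
  | zero => exact ⟨0, h0.le, by have := hf (show 0 < 0 + 1 by omega); omega⟩
  | succ i ih =>
    obtain ⟨t, hti, hit⟩ := ih
    by_cases h : i + 1 < f (t + 1)
    · exact ⟨t, by omega, h⟩
    · exact ⟨t + 1, by omega, by have := hf (show t + 1 < t + 1 + 1 by omega); omega⟩

section Substitution

variable {A B : Type*} (φ : A → List B)

lemma msubst_append (x y : List A) : msubst φ (x ++ y) = msubst φ x ++ msubst φ y :=
  List.flatMap_append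

lemma msubst_singleton (a : A) : msubst φ [a] = φ a :=
  List.flatMap_singleton φ a

lemma msubst_ne_nil (hne : ∀ a, φ a ≠ []) {l : List A} (hl : l ≠ []) : msubst φ l ≠ [] := by
  obtain ⟨a, ha⟩ := List.exists_mem_of_ne_nil l hl
  exact fun h => hne a (List.flatMap_eq_nil_iff.mp h a ha)

lemma length_msubst_le {C : ℕ} (hC : ∀ a, (φ a).length ≤ C) (l : List A) :
    (msubst φ l).length ≤ C * l.length := by
  induction l with
  | nil => simp [msubst]
  | cons a l ih =>
    rw [← List.singleton_append, msubst_append, msubst_singleton, List.length_append,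
      List.length_append, List.length_singleton]
    linarith [hC a]

end Substitution

section Iteration

variable {A : Type*} (φ : A → List A)

lemma iterate_msubst_append (n : ℕ) (x y : List A) :
    (msubst φ)^[n] (x ++ y) = (msubst φ)^[n] x ++ (msubst φ)^[n] y := by
  induction n generalizing x y with
  | zero => rfl
  | succ n ih => simp only [iterate_succ_apply, msubst_append, ih]

lemma iterate_msubst_nil (n : ℕ) : (msubst φ)^[n] [] = [] :=
  iterate_fixed rfl n

lemma List.IsInfix.iterate_msubst {s l : List A} (h : s <:+: l) (n : ℕ) :
    (msubst φ)^[n] s <:+: (msubst φ)^[n] l := by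
  obtain ⟨x, y, rfl⟩ := h
  exact ⟨_, _, by rw [iterate_msubst_append, iterate_msubst_append]⟩

lemma iterate_msubst_ne_nil (hne : ∀ a, φ a ≠ []) (n : ℕ) {l : List A} (hl : l ≠ []) :
    (msubst φ)^[n] l ≠ [] := by
  induction n with
  | zero => exact hl
  | succ n ih => rw [iterate_succ_apply']; exact msubst_ne_nil φ hne ih

lemma length_iterate_msubst_le {C : ℕ} (hC : ∀ a, (φ a).length ≤ C) (n : ℕ) (l : List A) :
    ((msubst φ)^[n] l).length ≤ C ^ n * l.length := by
  induction n with
  | zero => simp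
  | succ n ih =>
    rw [iterate_succ_apply', pow_succ', Nat.mul_assoc]
    exact (length_msubst_le φ hC _).trans (Nat.mul_le_mul_left C ih)

lemma iterate_msubst_infix_of_mem {k : ℕ} {a b : A} (hb : b ∈ (msubst φ)^[k] [a]) (n : ℕ) :
    (msubst φ)^[n] [b] <:+: (msubst φ)^[n + k] [a] := by
  rw [iterate_add_apply]
  exact ((List.singleton_infix_iff b _).mpr hb).iterate_msubst φ n

lemma ne_nil_of_primitive {k : ℕ} (hk : ∀ a b : A, b ∈ (msubst φ)^[k] [a]) {b : A}
    (hb : φ b ≠ []) (a : A) : φ a ≠ [] := by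
  cases k with
  | zero => rwa [List.mem_singleton.mp (hk a b)] at hb
  | succ k =>
    intro ha
    have : (msubst φ)^[k + 1] [a] = [] := by
      rw [iterate_succ_apply, msubst_singleton, ha, iterate_msubst_nil]
    simpa [this] using hk a a

lemma exists_level_length_between {k C N : ℕ} (hk : ∀ a b : A, b ∈ (msubst φ)^[k] [a])
    (hne : ∀ a, φ a ≠ []) (hC : ∀ a, (φ a).length ≤ C)
    (hunbdd : ∀ N, ∃ m, ∀ a, N ≤ ((msubst φ)^[m] [a]).length) (hN : 1 ≤ N) :
    ∃ m, (∀ a, N ≤ ((msubst φ)^[m] [a]).length) ∧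
      ∀ a, ((msubst φ)^[m] [a]).length ≤ C ^ (k + 1) * N := by
  classical
  refine ⟨Nat.find (hunbdd N), Nat.find_spec (hunbdd N), fun c => ?_⟩
  rcases h : Nat.find (hunbdd N) with _ | m
  · have hC1 : 1 ≤ C := (List.length_pos_iff.mpr (hne c)).trans_le (hC c)
    simpa using Nat.mul_le_mul (Nat.one_le_pow _ _ hC1) hN
  · obtain ⟨a, ha⟩ : ∃ a, ((msubst φ)^[m] [a]).length < N := by
      simpa using Nat.find_min (hunbdd N) (h ▸ Nat.lt_succ_self m)
    calc ((msubst φ)^[m + 1] [c]).length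
        ≤ C * ((msubst φ)^[m] [c]).length := by
          rw [iterate_succ_apply']; exact length_msubst_le φ hC _
      _ ≤ C * ((msubst φ)^[k] ((msubst φ)^[m] [a])).length := by
          rw [← iterate_add_apply, Nat.add_comm k]
          exact Nat.mul_le_mul_left C (iterate_msubst_infix_of_mem φ (hk a c) m).length_le
      _ ≤ C * (C ^ k * N) :=
          Nat.mul_le_mul_left C ((length_iterate_msubst_le φ hC k _).trans
            (Nat.mul_le_mul_left _ ha.le))
      _ = C ^ (k + 1) * N := by ring

end Iteration

section Factors

variable {A : Type*} (W : ℕ → A)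

lemma length_factorAt (i n : ℕ) : (factorAt W i n).length = n := by
  simp [factorAt]

lemma factorAt_add (i m n : ℕ) :
    factorAt W i (m + n) = factorAt W i m ++ factorAt W (i + m) n := by
  simp [factorAt, List.range_add, Function.comp_def, Nat.add_assoc]

lemma factorAt_zero_succ (t : ℕ) : factorAt W 0 (t + 1) = factorAt W 0 t ++ [W t] := by
  rw [factorAt_add, Nat.zero_add]
  simp [factorAt]

lemma factorAt_two (i : ℕ) : factorAt W i 2 = [W i, W (i + 1)] := by
  simp [factorAt, List.range_succ]

lemma factorAt_prefix_factorAt {i m n : ℕ} (h : m ≤ n) : factorAt W i m <+: factorAt W i n := by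
  obtain ⟨d, rfl⟩ := Nat.exists_eq_add_of_le h
  rw [factorAt_add]
  exact List.prefix_append _ _

lemma factorAt_infix_factorAt {i n p q : ℕ} (h₁ : i ≤ p) (h₂ : p + q ≤ i + n) :
    factorAt W p q <:+: factorAt W i n := by
  obtain ⟨d, rfl⟩ := Nat.exists_eq_add_of_le h₁
  have hn : n = d + (q + (n - d - q)) := by omega
  rw [hn, factorAt_add, factorAt_add, ← List.append_assoc]
  exact List.infix_append _ _ _

lemma eq_factorAt_of_prefix {x : List A} {i n : ℕ} (h : x <+: factorAt W i n) :
    x = factorAt W i x.length := by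
  have hlen : x.length ≤ n := length_factorAt W i n ▸ h.length_le
  rw [List.prefix_iff_eq_take.mp h, List.length_take, length_factorAt, Nat.min_eq_left hlen,
    factorAt, factorAt, ← List.map_take, List.take_range, Nat.min_eq_left hlen]

lemma exists_factorAt_zero_infix_pairs [Finite A] :
    ∃ L, ∀ t, [W t, W (t + 1)] <:+: factorAt W 0 L := by
  classical
  let firstOcc : A × A → ℕ := fun p => if h : ∃ s, (W s, W (s + 1)) = p then Nat.find h else 0
  obtain ⟨L, hL⟩ := Finite.exists_le firstOcc
  refine ⟨L + 2, fun t => ?_⟩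
  have h : ∃ s, (W s, W (s + 1)) = (W t, W (t + 1)) := ⟨t, rfl⟩
  obtain ⟨s, hs, hsL⟩ : ∃ s, (W s, W (s + 1)) = (W t, W (t + 1)) ∧ s ≤ L := by
    have := hL (W t, W (t + 1))
    simp only [firstOcc, dif_pos h] at this
    exact ⟨Nat.find h, Nat.find_spec h, this⟩
  obtain ⟨hs₁, hs₂⟩ := Prod.mk.injEq _ _ _ _ ▸ hs
  rw [← hs₁, ← hs₂, ← factorAt_two]
  exact factorAt_infix_factorAt W (Nat.zero_le _) (by omega)

end Factors

section FixedPoint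

variable {A : Type*} {φ : A → List A} {a₁ : A} {u : List A} {W : ℕ → A}

/-- Position in `W = φᵐ(W)` at which the block `φᵐ(W t)` starts. -/
def blockStart (φ : A → List A) (W : ℕ → A) (m t : ℕ) : ℕ :=
  ((msubst φ)^[m] (factorAt W 0 t)).length

lemma blockStart_zero (m : ℕ) : blockStart φ W m 0 = 0 := by
  simp [blockStart, factorAt, iterate_msubst_nil]

lemma blockStart_succ (m t : ℕ) :
    blockStart φ W m (t + 1) = blockStart φ W m t + ((msubst φ)^[m] [W t]).length := by
  rw [blockStart, factorAt_zero_succ, iterate_msubst_append, List.length_append, blockStart]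

lemma exists_mem_Ico_blockStart (hne : ∀ a, φ a ≠ []) (m i : ℕ) :
    ∃ t, i ∈ Set.Ico (blockStart φ W m t) (blockStart φ W m (t + 1)) :=
  Nat.exists_mem_Ico_of_strictMono (blockStart_zero m) (strictMono_nat_of_lt_succ fun t => by
    rw [blockStart_succ]
    have := List.length_pos_iff.mpr (iterate_msubst_ne_nil φ hne m (List.cons_ne_nil (W t) []))
    omega) i

lemma iterate_msubst_succ_of_fixed (hfix : φ a₁ = a₁ :: u) (n : ℕ) :
    (msubst φ)^[n + 1] [a₁] = (msubst φ)^[n] [a₁] ++ (msubst φ)^[n] u := by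
  rw [iterate_succ_apply, msubst_singleton, hfix, ← List.singleton_append, iterate_msubst_append]

lemma lt_length_iterate_of_fixed (hfix : φ a₁ = a₁ :: u)
    (hgrow : ∀ n : ℕ, (msubst φ)^[n] u ≠ []) (n : ℕ) :
    n < ((msubst φ)^[n] [a₁]).length := by
  induction n with
  | zero => simp
  | succ n ih =>
    rw [iterate_msubst_succ_of_fixed hfix, List.length_append]
    have := List.length_pos_iff.mpr (hgrow n)
    omega

lemma le_length_iterate_of_primitive (hfix : φ a₁ = a₁ :: u)
    (hgrow : ∀ n : ℕ, (msubst φ)^[n] u ≠ []) {k : ℕ} (hk : ∀ a b : A, b ∈ (msubst φ)^[k] [a])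
    (n : ℕ) (a : A) : n ≤ ((msubst φ)^[n + k] [a]).length :=
  (lt_length_iterate_of_fixed hfix hgrow n).le.trans
    (iterate_msubst_infix_of_mem φ (hk a a₁) n).length_le

variable (hfix : φ a₁ = a₁ :: u) (hgrow : ∀ n : ℕ, (msubst φ)^[n] u ≠ [])
  (hW : ∀ n : ℕ, factorAt W 0 ((msubst φ)^[n] [a₁]).length = (msubst φ)^[n] [a₁])
include hfix hgrow hW

lemma iterate_msubst_factorAt_zero (m t : ℕ) :
    (msubst φ)^[m] (factorAt W 0 t) = factorAt W 0 (blockStart φ W m t) := by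
  have ht := (lt_length_iterate_of_fixed hfix hgrow t).le
  obtain ⟨r, hr⟩ : factorAt W 0 t <+: (msubst φ)^[t] [a₁] := hW t ▸ factorAt_prefix_factorAt W ht
  have : (msubst φ)^[m] (factorAt W 0 t) <+: factorAt W 0 ((msubst φ)^[m + t] [a₁]).length := by
    rw [hW, iterate_add_apply, ← hr, iterate_msubst_append]
    exact List.prefix_append _ _
  exact eq_factorAt_of_prefix W this

lemma iterate_msubst_letter (m t : ℕ) :
    (msubst φ)^[m] [W t] = factorAt W (blockStart φ W m t) ((msubst φ)^[m] [W t]).length := by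
  have h := iterate_msubst_factorAt_zero hfix hgrow hW m (t + 1)
  rw [factorAt_zero_succ, iterate_msubst_append, iterate_msubst_factorAt_zero hfix hgrow hW,
    blockStart_succ, factorAt_add, Nat.zero_add] at h
  exact List.append_cancel_left h

lemma exists_iterate_infix_pairs [Finite A] :
    ∃ K, ∀ t, [W t, W (t + 1)] <:+: (msubst φ)^[K] [a₁] := by
  obtain ⟨L, hL⟩ := exists_factorAt_zero_infix_pairs W
  refine ⟨L, fun t => (hL t).trans ?_⟩
  rw [← hW L]
  exact (factorAt_prefix_factorAt W (lt_length_iterate_of_fixed hfix hgrow L).le).isInfix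

lemma exists_infix_iterate_pair (hne : ∀ a, φ a ≠ []) {m N : ℕ}
    (hN : ∀ a, N ≤ ((msubst φ)^[m] [a]).length) {v : List A} (hv : IsFactorOf v W)
    (hvlen : v.length = N) : ∃ t, v <:+: (msubst φ)^[m] [W t, W (t + 1)] := by
  obtain ⟨i, hi⟩ := hv
  obtain ⟨t, hti, hit⟩ := exists_mem_Ico_blockStart (W := W) hne m i
  refine ⟨t, ?_⟩
  have := hN (W (t + 1))
  rw [blockStart_succ] at hit
  rw [← List.singleton_append, iterate_msubst_append, iterate_msubst_letter hfix hgrow hW m t,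
    iterate_msubst_letter hfix hgrow hW m (t + 1), blockStart_succ, ← factorAt_add, hi]
  exact factorAt_infix_factorAt W hti (by omega)

lemma exists_iterate_letter_infix (hne : ∀ a, φ a ≠ []) {m L : ℕ}
    (hL : ∀ a, ((msubst φ)^[m] [a]).length ≤ L) {w : List A} (hw : IsFactorOf w W)
    (hwlen : 2 * L ≤ w.length) : ∃ t, (msubst φ)^[m] [W t] <:+: w := by
  obtain ⟨i, hi⟩ := hw
  obtain ⟨t, hti, hit⟩ := exists_mem_Ico_blockStart (W := W) hne m i
  refine ⟨t + 1, ?_⟩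
  have h₁ := hL (W t)
  have h₂ := hL (W (t + 1))
  have hnext := blockStart_succ (φ := φ) (W := W) m t
  rw [iterate_msubst_letter hfix hgrow hW, hi]
  exact factorAt_infix_factorAt W hit.le (by omega)

end FixedPoint

/-- A purely morphic word generated by a primitive morphism has a linearly bounded
recurrence function: every factor of length C₃·N contains every factor of length N. -/
theorem stmt2 {A : Type*} [Fintype A] (φ : A → List A) (a₁ : A) (u : List A)
    (hfix : φ a₁ = a₁ :: u)
    (hgrow : ∀ n : ℕ, (msubst φ)^[n] u ≠ [])
    (hprim : ∃ k : ℕ, ∀ a b : A, b ∈ (msubst φ)^[k] [a])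
    (W : ℕ → A)
    (hW : ∀ n : ℕ, factorAt W 0 ((msubst φ)^[n] [a₁]).length = (msubst φ)^[n] [a₁]) :
    ∃ C₃ : ℕ, ∀ N ≥ 1, ∀ u' v : List A,
      IsFactorOf u' W → u'.length = C₃ * N →
      IsFactorOf v W → v.length = N → v <:+: u' := by
  obtain ⟨k, hk⟩ := hprim
  have hne : ∀ a, φ a ≠ [] := ne_nil_of_primitive φ hk (b := a₁) (by simp [hfix])
  obtain ⟨C, hC⟩ := Finite.exists_le fun a => (φ a).length
  have hunbdd : ∀ N, ∃ m, ∀ a, N ≤ ((msubst φ)^[m] [a]).length := fun N =>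
    ⟨N + k, le_length_iterate_of_primitive hfix hgrow hk N⟩
  obtain ⟨K, hK⟩ := exists_iterate_infix_pairs hfix hgrow hW
  refine ⟨2 * C ^ (K + 2 * k + 1), fun N hN u' v hu' hulen hv hvlen => ?_⟩
  obtain ⟨m, hmN, hmC⟩ := exists_level_length_between φ hk hne hC hunbdd hN
  have hblock : ∀ c, ((msubst φ)^[m + K + k] [c]).length ≤ C ^ (K + 2 * k + 1) * N := fun c =>
    calc ((msubst φ)^[m + K + k] [c]).length ≤ C ^ (K + k) * ((msubst φ)^[m] [c]).length := by
          rw [show m + K + k = (K + k) + m by omega, iterate_add_apply]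
          exact length_iterate_msubst_le φ hC _ _
      _ ≤ C ^ (K + k) * (C ^ (k + 1) * N) := Nat.mul_le_mul_left _ (hmC c)
      _ = C ^ (K + 2 * k + 1) * N := by ring
  obtain ⟨t, hvt⟩ := exists_infix_iterate_pair hfix hgrow hW hne hmN hv hvlen
  obtain ⟨t', ht'⟩ := exists_iterate_letter_infix hfix hgrow hW hne hblock hu'
    (by rw [hulen, Nat.mul_assoc])
  have hpair : (msubst φ)^[m] [W t, W (t + 1)] <:+: (msubst φ)^[m + K] [a₁] := by
    rw [iterate_add_apply]; exact (hK t).iterate_msubst φ m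
  exact hvt.trans (hpair.trans ((iterate_msubst_infix_of_mem φ (hk _ a₁) _).trans ht'))
end

section
/- Let W be a uniformly recurrent infinite word over alphabet A with at most linear recurrence function P₂(k) ≤ C₃·k, and let ψ : A* → A* be the morphism that maps each letter a_i either to itself or to the empty word. If ψ(W) (the word obtained by deleting from W all letters erased by ψ) is infinite, then ψ(W) has at most linear recurrence function. -/
open Set

namespace StrictMono

variable {e : ℕ → ℕ}

theorem apply_add_le_of_syndetic {K : ℕ} (he : StrictMono e)
    (h : ∀ p, ∃ m, p ≤ e m ∧ e m < p + K) (n r : ℕ) : e (n + r) ≤ e n + K * r := by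
  induction r with
  | zero => simp
  | succ r ih =>
    obtain ⟨m, hpm, hmK⟩ := h (e (n + r) + 1)
    have hnm : n + r + 1 ≤ m := he.lt_iff_lt.1 (by omega)
    have := he.monotone hnm
    rw [Nat.mul_succ, ← Nat.add_assoc]
    omega

theorem apply_eq_of_forall_lt_mem_range_iff {f g : ℕ → ℕ} {L : ℕ} (hf : StrictMono f)
    (hg : StrictMono g) (h : ∀ x < L, x ∈ range f ↔ x ∈ range g) (r : ℕ) (hr : f r < L) :
    f r = g r := by
  induction r using Nat.strong_induction_on with
  | _ r ih =>
    obtain ⟨s, hs⟩ := (h _ hr).1 ⟨r, rfl⟩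
    rcases lt_trichotomy s r with hsr | rfl | hrs
    · have hfs := ih s hsr ((hf hsr).trans hr)
      exact absurd (hf.injective (hfs.trans hs)) hsr.ne
    · exact hs.symm
    · have hgr : g r < L := (hg hrs).trans (hs ▸ hr)
      obtain ⟨t, ht⟩ := (h _ hgr).2 ⟨r, rfl⟩
      have htr : t < r := hf.lt_iff_lt.1 (ht ▸ hs ▸ hg hrs)
      exact absurd (hg.injective ((ih t htr (ht ▸ hgr)).symm.trans ht)) htr.ne

theorem sub_apply_add (he : StrictMono e) (n : ℕ) : StrictMono (fun r => e (n + r) - e n) := by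
  intro a b hab
  have := he (Nat.add_lt_add_left hab n)
  have := he.monotone (Nat.le_add_right n a)
  dsimp only
  omega

theorem mem_range_sub_apply_add_iff (he : StrictMono e) (n x : ℕ) :
    x ∈ range (fun r => e (n + r) - e n) ↔ e n + x ∈ range e := by
  constructor
  · rintro ⟨r, rfl⟩
    have := he.monotone (Nat.le_add_right n r)
    exact ⟨n + r, show e (n + r) = e n + (e (n + r) - e n) by omega⟩
  · rintro ⟨k, hk⟩
    have hnk : n ≤ k := he.le_iff_le.1 (by omega)
    exact ⟨k - n, show e (n + (k - n)) - e n = x by rw [Nat.add_sub_cancel' hnk]; omega⟩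

theorem apply_add_eq_of_forall_mem_range_iff {L m n r : ℕ} (he : StrictMono e)
    (h : ∀ t < L, e n + t ∈ range e ↔ e m + t ∈ range e) (hr : e (n + r) < e n + L) :
    e (m + r) = e m + (e (n + r) - e n) := by
  have hn := he.monotone (Nat.le_add_right n r)
  have hm := he.monotone (Nat.le_add_right m r)
  have := apply_eq_of_forall_lt_mem_range_iff (he.sub_apply_add n) (he.sub_apply_add m)
    (fun x hx => by rw [he.mem_range_sub_apply_add_iff, he.mem_range_sub_apply_add_iff]; exact h x hx)
    r (show e (n + r) - e n < L by omega)
  omega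

end StrictMono

section Word

variable {A : Type*}

theorem factorAt_length (W : ℕ → A) (i n : ℕ) : (factorAt W i n).length = n := by
  simp [factorAt]

theorem factorAt_infix_factorAt_iff (W : ℕ → A) (i j N L : ℕ) :
    factorAt W j N <:+: factorAt W i L ↔
      ∃ d, d + N ≤ L ∧ ∀ t < N, W (i + d + t) = W (j + t) := by
  simp only [List.infix_iff_getElem?, factorAt, List.length_map, List.length_range,
    List.getElem?_map, List.getElem_map, List.getElem_range, Nat.add_comm N]
  refine exists_congr fun d => and_congr_right fun hd => forall₂_congr fun t ht => ?_
  rw [List.getElem?_range (by omega)]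
  simp [add_comm t d, add_assoc]

def IsLinearlyRecurrent (W : ℕ → A) (C : ℕ) : Prop :=
  ∀ N ≥ 1, ∀ i j, factorAt W j N <:+: factorAt W i (C * N)

theorem isLinearlyRecurrent_iff (W : ℕ → A) (C : ℕ) :
    IsLinearlyRecurrent W C ↔ ∀ N ≥ 1, ∀ u v : List A, IsFactorOf u W → u.length = C * N →
      IsFactorOf v W → v.length = N → v <:+: u := by
  constructor
  · rintro h N hN u v ⟨i, hu⟩ hlu ⟨j, hv⟩ hlv
    rw [hu, hv, hlu, hlv]
    exact h N hN i j
  · intro h N hN i j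
    exact h N hN _ _ ⟨i, by rw [factorAt_length]⟩ (factorAt_length ..)
      ⟨j, by rw [factorAt_length]⟩ (factorAt_length ..)

theorem IsLinearlyRecurrent.exists_eq_of_window {W : ℕ → A} {C : ℕ}
    (hW : IsLinearlyRecurrent W C) (p k : ℕ) : ∃ d < C, W (p + d) = W k := by
  obtain ⟨d, hd, hWd⟩ := (factorAt_infix_factorAt_iff ..).1 (hW 1 le_rfl p k)
  exact ⟨d, by omega, hWd 0 one_pos⟩

theorem IsLinearlyRecurrent.exists_mem_range_of_keep_iff {W : ℕ → A} {C : ℕ} {e : ℕ → ℕ}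
    (keep : A → Prop) (hW : IsLinearlyRecurrent W C) (hkeep : ∀ i, keep (W i) ↔ i ∈ range e)
    (p : ℕ) : ∃ m, p ≤ e m ∧ e m < p + C := by
  obtain ⟨d, hd, hWd⟩ := hW.exists_eq_of_window p (e 0)
  obtain ⟨m, hm⟩ := (hkeep _).1 (hWd ▸ (hkeep _).2 ⟨0, rfl⟩)
  exact ⟨m, by omega⟩

theorem IsLinearlyRecurrent.comp_of_keep_iff_mem_range {W : ℕ → A} {C : ℕ}
    {e : ℕ → ℕ} (keep : A → Prop) (hW : IsLinearlyRecurrent W C) (he : StrictMono e)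
    (hkeep : ∀ i, keep (W i) ↔ i ∈ range e) : IsLinearlyRecurrent (W ∘ e) (C * C) := by
  intro N hN i j
  have hsyn := hW.exists_mem_range_of_keep_iff keep hkeep
  have hspan : ∀ r < N, e (j + r) < e j + C * N := fun r hr =>
    calc e (j + r) < e (j + (r + 1)) := he (by omega)
      _ ≤ e j + C * (r + 1) := he.apply_add_le_of_syndetic hsyn j (r + 1)
      _ ≤ e j + C * N := by gcongr; omega
  have hCN : 1 ≤ C * N := by have := hspan 0 hN; rw [Nat.add_zero] at this; omega
  obtain ⟨d, hd, hagree⟩ := (factorAt_infix_factorAt_iff ..).1 (hW (C * N) hCN (e i) (e j))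
  obtain ⟨m, hm⟩ : e i + d ∈ range e := by
    have h0 := hagree 0 hCN
    rw [Nat.add_zero, Nat.add_zero] at h0
    rw [← hkeep, h0, hkeep]
    exact ⟨j, rfl⟩
  have hshift : ∀ r < N, e (m + r) = e m + (e (j + r) - e j) := fun r hr =>
    he.apply_add_eq_of_forall_mem_range_iff
      (fun t ht => by simp only [← hkeep, hm, hagree t ht]) (hspan r hr)
  have hmi : i ≤ m := he.le_iff_le.1 (by omega)
  rw [factorAt_infix_factorAt_iff]
  refine ⟨m - i, ?_, fun t ht => ?_⟩
  · -- the positions `i, …, m + N - 1` of `W ∘ e` enumerate kept positions of `W` in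
    -- `[e i, e i + d + C * N)`, an interval of length at most `C * (C * N)`
    have h1 := he.add_le_nat (m + (N - 1) - i) i
    have h2 := hshift (N - 1) (by omega)
    have h3 := hspan (N - 1) (by omega)
    rw [show m + (N - 1) - i + i = m + (N - 1) by omega] at h1
    rw [Nat.mul_assoc]
    omega
  · have hjt := he.monotone (Nat.le_add_right j t)
    simp only [Function.comp, show i + (m - i) + t = m + t by omega, hshift t ht, hm]
    rw [hagree _ (by have := hspan t ht; omega), Nat.add_sub_cancel' hjt]

end Word

/-- Projecting a uniformly recurrent word with linear recurrence by deleting some letters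
yields a word with linear recurrence (if the result is infinite). -/
theorem stmt3 {A : Type*} (W : ℕ → A) (C₃ : ℕ)
    (hrec : ∀ N ≥ 1, ∀ u v : List A, IsFactorOf u W → u.length = C₃ * N →
      IsFactorOf v W → v.length = N → v <:+: u)
    (keep : A → Prop)
    (V : ℕ → A) (e : ℕ → ℕ) (hmono : StrictMono e)
    (hV : ∀ n, V n = W (e n))
    (hkeep : ∀ i, keep (W i) ↔ ∃ n, e n = i) :
    ∃ C : ℕ, ∀ N ≥ 1, ∀ u v : List A, IsFactorOf u V → u.length = C * N →
      IsFactorOf v V → v.length = N → v <:+: u := by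
  obtain rfl : V = W ∘ e := funext hV
  exact ⟨C₃ * C₃, (isLinearlyRecurrent_iff ..).1
    (((isLinearlyRecurrent_iff W C₃).2 hrec).comp_of_keep_iff_mem_range keep hmono hkeep)⟩
end

section
/- Let S be a 'word-labeled graph' (each vertex has either in-degree 1 and out-degree > 1, hence 'distributing', or in-degree > 1 and out-degree 1, hence 'collecting') in which property 3 of Rauzy schemes holds (front word equals back word on symmetric paths) and the concatenation property: if path s₁ ends at a distributing vertex where path s₂ starts, then F(s₁s₂) = F(s₁)F(s₂). Then for any path s₁ that is a sub-path of a symmetric path s, the front word F(s₁) is a factor of F(s). -/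
/-- A word-labeled graph: a directed graph each of whose vertices is either
"distributing" (in-degree 1, out-degree > 1) or "collecting" (in-degree > 1,
out-degree 1), with each edge carrying a front word and a back word. -/
structure WLGraph (V E Sig : Type*) where
  src : E → V
  tgt : E → V
  front : E → List Sig
  back : E → List Sig
  /-- `dist v = true` means `v` is distributing; `false` means collecting. -/
  dist : V → Bool
  indeg_dist : ∀ v, dist v = true → ∃! e, tgt e = v
  outdeg_dist : ∀ v, dist v = true → ∃ e₁ e₂, src e₁ = v ∧ src e₂ = v ∧ e₁ ≠ e₂
  outdeg_coll : ∀ v, dist v = false → ∃! e, src e = v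
  indeg_coll : ∀ v, dist v = false → ∃ e₁ e₂, tgt e₁ = v ∧ tgt e₂ = v ∧ e₁ ≠ e₂

/-- A path: consecutive edges are incident. -/
def WLGraph.IsPath {V E Sig : Type*} (G : WLGraph V E Sig) (s : List E) : Prop :=
  s.Chain' (fun e₁ e₂ => G.tgt e₁ = G.src e₂)

/-- The front word of a path: concatenation of the front words of the front-generating
edges (the first edge together with all edges leaving distributing vertices). -/
def WLGraph.FrontWord {V E Sig : Type*} (G : WLGraph V E Sig) : List E → List Sig
  | [] => []
  | e :: rest => G.front e ++ (rest.filter (fun e₂ => G.dist (G.src e₂))).flatMap G.front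

/-- The back word of a path: concatenation of the back words of the back-generating
edges (all edges entering collecting vertices, together with the last edge). -/
def WLGraph.BackWord {V E Sig : Type*} (G : WLGraph V E Sig) (s : List E) : List Sig :=
  (s.dropLast.filter (fun e₂ => !G.dist (G.tgt e₂))).flatMap G.back ++
    (s.getLast?.elim [] G.back)

/-- A symmetric path: a nonempty path starting at a collecting vertex and ending at a
distributing vertex. -/
def WLGraph.IsSymmetric {V E Sig : Type*} (G : WLGraph V E Sig) (s : List E) : Prop :=
  G.IsPath s ∧ s ≠ [] ∧
    (∀ e, s.head? = some e → G.dist (G.src e) = false) ∧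
    (∀ e, s.getLast? = some e → G.dist (G.tgt e) = true)

/-!
Write the symmetric path as `s = a ++ s₁ ++ b`. The front word of `s₁` is always a prefix of the
front word of `s₁ ++ b`, so it suffices that `F(c)` is a suffix of `F(a ++ c)` for `c = s₁ ++ b`.
If `c` starts at a distributing vertex, its first edge is a front generator of `a ++ c` and
`F(a ++ c) = F(a) F(c)` holds outright. If `c` starts at a collecting vertex, then `c` is itself
symmetric, and property 3 turns the question into one about back words, where the concatenation
property gives `B(a ++ c) = B(a) B(c)`.
-/

namespace WLGraph

variable {V E Sig : Type*} (G : WLGraph V E Sig)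

theorem frontWord_isPrefix_append (s t : List E) : G.FrontWord s <+: G.FrontWord (s ++ t) := by
  cases s with
  | nil => exact List.nil_prefix
  | cons e s =>
    exact ⟨(t.filter fun e₂ => G.dist (G.src e₂)).flatMap G.front, by
      simp [FrontWord, List.filter_append, List.flatMap_append]⟩

theorem frontWord_append_cons_of_dist {a : List E} (ha : a ≠ []) {e : E} (t : List E)
    (he : G.dist (G.src e) = true) :
    G.FrontWord (a ++ e :: t) = G.FrontWord a ++ G.FrontWord (e :: t) := by
  obtain ⟨e₀, a, rfl⟩ := List.exists_cons_of_ne_nil ha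
  simp [FrontWord, List.filter_append, he, List.flatMap_append]

variable {G}

theorem IsSymmetric.right_of_append {a c : List E} (hs : G.IsSymmetric (a ++ c)) (hc : c ≠ [])
    (hhead : ∀ e, c.head? = some e → G.dist (G.src e) = false) : G.IsSymmetric c := by
  obtain ⟨hpath, -, -, hlast⟩ := hs
  refine ⟨hpath.right_of_append, hc, hhead, fun e he => hlast e ?_⟩
  rwa [List.getLast?_append_of_ne_nil _ hc]

theorem frontWord_isSuffix_of_isSymmetric
    (hsym : ∀ s : List E, G.IsSymmetric s → G.FrontWord s = G.BackWord s)
    (hconcatB : ∀ s₁ s₂ : List E, G.IsPath (s₁ ++ s₂) → s₁ ≠ [] → s₂ ≠ [] →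
      (∀ e, s₂.head? = some e → G.dist (G.src e) = false) →
      G.BackWord (s₁ ++ s₂) = G.BackWord s₁ ++ G.BackWord s₂)
    {a c : List E} (hs : G.IsSymmetric (a ++ c)) (hc : c ≠ []) :
    G.FrontWord c <:+ G.FrontWord (a ++ c) := by
  rcases eq_or_ne a [] with rfl | ha
  · exact List.suffix_refl _
  obtain ⟨e, t, rfl⟩ := List.exists_cons_of_ne_nil hc
  cases hd : G.dist (G.src e)
  · have hhead : ∀ e', (e :: t).head? = some e' → G.dist (G.src e') = false := by
      rintro _ ⟨⟩
      exact hd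
    rw [hsym _ hs, hsym _ (hs.right_of_append hc hhead),
      hconcatB a _ hs.1 ha hc hhead]
    exact List.suffix_append _ _
  · rw [G.frontWord_append_cons_of_dist ha t hd]
    exact List.suffix_append _ _

end WLGraph

theorem stmt18_general {V E Sig : Type*} (G : WLGraph V E Sig)
    (hsym : ∀ s : List E, G.IsSymmetric s → G.FrontWord s = G.BackWord s)
    (hconcatB : ∀ s₁ s₂ : List E, G.IsPath (s₁ ++ s₂) → s₁ ≠ [] → s₂ ≠ [] →
      (∀ e, s₂.head? = some e → G.dist (G.src e) = false) →
      G.BackWord (s₁ ++ s₂) = G.BackWord s₁ ++ G.BackWord s₂)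
    (s s₁ : List E) (hs : G.IsSymmetric s) (hne : s₁ ≠ [])
    (hsub : s₁ <:+: s) :
    G.FrontWord s₁ <:+: G.FrontWord s := by
  obtain ⟨a, b, rfl⟩ := hsub
  rw [List.append_assoc] at hs ⊢
  exact (G.frontWord_isPrefix_append s₁ b).isInfix.trans
    (WLGraph.frontWord_isSuffix_of_isSymmetric hsym hconcatB hs
      (List.append_ne_nil_of_left_ne_nil hne b)).isInfix

/-- In a word-labeled graph satisfying property 3 of Rauzy schemes (front = back on
symmetric paths) and the concatenation properties, the front word of a sub-path of a
symmetric path is a factor of the front word of that symmetric path. -/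
theorem stmt18 {V E Sig : Type*} (G : WLGraph V E Sig)
    (hsym : ∀ s : List E, G.IsSymmetric s → G.FrontWord s = G.BackWord s)
    (hconcatF : ∀ s₁ s₂ : List E, G.IsPath (s₁ ++ s₂) → s₁ ≠ [] → s₂ ≠ [] →
      (∀ e, s₂.head? = some e → G.dist (G.src e) = true) →
      G.FrontWord (s₁ ++ s₂) = G.FrontWord s₁ ++ G.FrontWord s₂)
    (hconcatB : ∀ s₁ s₂ : List E, G.IsPath (s₁ ++ s₂) → s₁ ≠ [] → s₂ ≠ [] →
      (∀ e, s₂.head? = some e → G.dist (G.src e) = false) →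
      G.BackWord (s₁ ++ s₂) = G.BackWord s₁ ++ G.BackWord s₂)
    (s s₁ : List E) (hs : G.IsSymmetric s) (hs₁ : G.IsPath s₁) (hne : s₁ ≠ [])
    (hsub : s₁ <:+: s) :
    G.FrontWord s₁ <:+: G.FrontWord s :=
  stmt18_general G hsym hconcatB s s₁ hs hne hsub
end
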